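/- Every separating triangle of an Apollonian network T gives rise to a subgraph of T isomorphic to K_{2,3} in which the two vertices of the partition set of size two are not adjacent in T. More precisely, if (v1,v2,v3) is a separating triangle of T, then there exist two non-adjacent vertices v and w of T, each adjacent to all of v1, v2, v3. -/

import Mathlib

open SimpleGraph

/-- The complete graph `K4` on the vertices `{0,1,2,3}` of `ℕ`. -/
def K4n : SimpleGraph ℕ where
  Adj x y := x ≠ y ∧ x < 4 ∧ y < 4
  symm := ⟨fun _ _ h => ⟨h.1.symm, h.2.2, h.2.1⟩⟩
  loopless := ⟨fun _ h => h.1 rfl⟩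

/-- Add a new apex vertex `v` joined to the three vertices `a`, `b`, `c`. -/
def addApex (G : SimpleGraph ℕ) (v a b c : ℕ) : SimpleGraph ℕ :=
  G ⊔ SimpleGraph.fromEdgeSet {s(v, a), s(v, b), s(v, c)}

/-- `ApollonianF G Fs` : `G` is an Apollonian network with set of (triangular) faces `Fs`,
built from `K4` by recursively subdividing a triangular face. -/
inductive ApollonianF : SimpleGraph ℕ → Set (Finset ℕ) → Prop
  | base : ApollonianF K4n {{0, 1, 2}, {0, 1, 3}, {0, 2, 3}, {1, 2, 3}}
  | subdivide (G : SimpleGraph ℕ) (Fs : Set (Finset ℕ)) (a b c v : ℕ) :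
      ApollonianF G Fs → ({a, b, c} : Finset ℕ) ∈ Fs →
      (∀ y, ¬ G.Adj v y) →
      ApollonianF (addApex G v a b c)
        ((Fs \ {({a, b, c} : Finset ℕ)}) ∪ {{v, a, b}, {v, a, c}, {v, b, c}})

/-- A graph (on vertex set its support) is an Apollonian network. -/
def IsApollonian (G : SimpleGraph ℕ) : Prop := ∃ Fs, ApollonianF G Fs

/-- The triangles (sets of three pairwise adjacent vertices) of `G`. -/
def triangleSet (G : SimpleGraph ℕ) : Set (Finset ℕ) :=
  {t | ∃ a b c : ℕ, t = {a, b, c} ∧ G.Adj a b ∧ G.Adj a c ∧ G.Adj b c}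

/-- A triangle is separating if deleting its vertices disconnects the graph. -/
def IsSeparatingTriangle (G : SimpleGraph ℕ) (t : Finset ℕ) : Prop :=
  t ∈ triangleSet G ∧ ¬ (G.induce (G.support \ ↑t)).Connected

/-- `G` is (isomorphic to) the complete graph on four vertices. -/
def IsK4Graph (G : SimpleGraph ℕ) : Prop :=
  ∃ s : Finset ℕ, ↑s = G.support ∧ s.card = 4 ∧ ∀ a ∈ s, ∀ b ∈ s, a ≠ b → G.Adj a b

/-- Delete the vertex `v` (and all incident edges). -/
def deleteVertex (G : SimpleGraph ℕ) (v : ℕ) : SimpleGraph ℕ where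
  Adj x y := G.Adj x y ∧ x ≠ v ∧ y ≠ v
  symm := ⟨fun _ _ h => ⟨h.1.symm, h.2.2, h.2.1⟩⟩
  loopless := ⟨fun x h => G.irrefl h.1⟩

/-!
Induct along the construction, carrying three facts about a network `G` with face set `Fs`:
every face together with one further vertex spans a `K4`; every triangle that is not a face has
two non-adjacent common neighbours; and deleting any subset of a face leaves `G` connected.
When a fresh vertex `v` subdivides the face `abc`, the triangle `abc` stops being a face, and its
common neighbours `v` and the old apex of `abc` are non-adjacent because `v` only sees `a, b, c`.
Every triangle through `v` is one of the three new faces, and the connectivity facts survive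
because `v` is attached to a vertex of `abc` that was not deleted. A separating triangle is
therefore not a face, so it has the two required common neighbours.
-/

namespace SimpleGraph

variable {V : Type*} {G : SimpleGraph V}

lemma Connected.induce_insert {A : Set V} {v x : V} (hA : (G.induce A).Connected) (hx : x ∈ A)
    (hvx : G.Adj v x) : (G.induce (insert v A)).Connected := by
  have hA' : insert v A = {v, x} ∪ A := by
    ext y
    simp only [Set.mem_insert_iff, Set.mem_union, Set.mem_singleton_iff]
    grind
  rw [hA']
  exact induce_union_connected (induce_pair_connected_of_adj hvx).preconnected hA.preconnected
    ⟨x, by simp, hx⟩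

lemma Connected.induce_of_le {H : SimpleGraph V} {A : Set V} (hGH : G ≤ H)
    (hA : (G.induce A).Connected) : (H.induce A).Connected :=
  hA.mono fun _ _ h => hGH h

lemma IsClique.connected_induce {A : Set V} (hA : G.IsClique A) (hne : A.Nonempty) :
    (G.induce A).Connected := by
  have := hne.to_subtype
  rw [induce_eq_top.2 hA]
  exact connected_top

lemma IsNClique.mem_support {n : ℕ} {s : Finset V} {x : V} (hs : G.IsNClique n s) (hn : 1 < n)
    (hx : x ∈ s) : x ∈ G.support := by
  obtain ⟨y, hy, hyx⟩ := s.exists_mem_ne (hs.card_eq ▸ hn) x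
  exact ⟨y, hs.isClique hx hy hyx.symm⟩

end SimpleGraph

def apexFaces {α : Type*} [DecidableEq α] (v a b c : α) : Set (Finset α) :=
  {{v, a, b}, {v, a, c}, {v, b, c}}

lemma mem_apexFaces_iff {α : Type*} [DecidableEq α] {v a b c : α} {t : Finset α}
    (hab : a ≠ b) (hac : a ≠ c) (hbc : b ≠ c) (hva : v ≠ a) (hvb : v ≠ b) (hvc : v ≠ c) :
    t ∈ apexFaces v a b c ↔
      ∃ r ∈ ({a, b, c} : Finset α), r ∉ t ∧ insert r t = insert v {a, b, c} := by
  constructor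
  · rintro (rfl | rfl | rfl)
    exacts [⟨c, by simp, by simp [hac.symm, hbc.symm, hvc.symm], by ext; simp; tauto⟩,
      ⟨b, by simp, by simp [hab.symm, hbc, hvb.symm], by ext; simp; tauto⟩,
      ⟨a, by simp, by simp [hab, hac, hva.symm], by ext; simp; tauto⟩]
  · rintro ⟨r, hr, hrt, hK⟩
    rw [← Finset.erase_insert hrt, hK]
    simp only [Finset.mem_insert, Finset.mem_singleton] at hr
    rcases hr with rfl | rfl | rfl
    · right; right; ext; simp; grind
    · right; left; ext; simp; grind
    · left; ext; simp; grind

section addApex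

variable {G : SimpleGraph ℕ} {v a b c x y : ℕ} {s t : Finset ℕ}

lemma addApex_adj : (addApex G v a b c).Adj x y ↔ G.Adj x y ∨
    x ≠ y ∧ (x = v ∧ y ∈ ({a, b, c} : Finset ℕ) ∨ y = v ∧ x ∈ ({a, b, c} : Finset ℕ)) := by
  simp only [addApex, sup_adj, fromEdgeSet_adj, Set.mem_insert_iff, Set.mem_singleton_iff,
    Sym2.eq, Sym2.rel_iff', Prod.mk.injEq, Prod.swap_prod_mk, Finset.mem_insert,
    Finset.mem_singleton]
  tauto

lemma le_addApex : G ≤ addApex G v a b c := le_sup_left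

lemma addApex_adj_of_ne (hx : x ≠ v) (hy : y ≠ v) : (addApex G v a b c).Adj x y ↔ G.Adj x y := by
  rw [addApex_adj]
  tauto

lemma notMem_of_notMem_support (hv : v ∉ G.support) (habc : G.IsNClique 3 {a, b, c}) :
    v ∉ ({a, b, c} : Finset ℕ) :=
  mt (habc.mem_support (by norm_num)) hv

lemma addApex_adj_apex_iff (hv : v ∉ G.support) (habc : G.IsNClique 3 {a, b, c}) :
    (addApex G v a b c).Adj v y ↔ y ∈ ({a, b, c} : Finset ℕ) := by
  have hvabc := notMem_of_notMem_support hv habc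
  rw [addApex_adj]
  constructor
  · rintro (h | ⟨-, ⟨-, hy⟩ | ⟨rfl, hv'⟩⟩)
    · exact absurd ⟨y, h⟩ hv
    · exact hy
    · exact absurd hv' hvabc
  · intro hy
    exact Or.inr ⟨fun h => hvabc (h ▸ hy), Or.inl ⟨rfl, hy⟩⟩

lemma support_addApex (hv : v ∉ G.support) (habc : G.IsNClique 3 {a, b, c}) :
    (addApex G v a b c).support = insert v G.support := by
  ext x
  constructor
  · rintro ⟨y, hxy⟩
    rcases addApex_adj.1 hxy with h | ⟨-, ⟨rfl, -⟩ | ⟨-, hx⟩⟩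
    · exact Or.inr ⟨y, h⟩
    · exact Or.inl rfl
    · exact Or.inr (habc.mem_support (by norm_num) hx)
  · rintro (rfl | hx)
    · exact ⟨a, (addApex_adj_apex_iff hv habc).2 (by simp)⟩
    · exact support_mono le_addApex hx

lemma isNClique_insert_apex (hv : v ∉ G.support) (habc : G.IsNClique 3 {a, b, c}) :
    (addApex G v a b c).IsNClique 4 (insert v {a, b, c}) :=
  (habc.mono le_addApex).insert fun _ hu => (addApex_adj_apex_iff hv habc).2 hu

lemma SimpleGraph.IsNClique.of_addApex {n : ℕ} (hvt : v ∉ t)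
    (ht : (addApex G v a b c).IsNClique n t) : G.IsNClique n t :=
  ⟨fun _ hx _ hy hxy => (addApex_adj_of_ne (ne_of_mem_of_not_mem hx hvt)
    (ne_of_mem_of_not_mem hy hvt)).1 (ht.isClique hx hy hxy), ht.card_eq⟩

lemma mem_apexFaces_iff_of_isNClique (hv : v ∉ G.support) (habc : G.IsNClique 3 {a, b, c}) :
    t ∈ apexFaces v a b c ↔
      ∃ r ∈ ({a, b, c} : Finset ℕ), r ∉ t ∧ insert r t = insert v {a, b, c} := by
  obtain ⟨hab, hac, hbc⟩ := is3Clique_triple_iff.1 habc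
  have hvabc := notMem_of_notMem_support hv habc
  exact mem_apexFaces_iff hab.ne hac.ne hbc.ne (by grind) (by grind) (by grind)

lemma mem_apexFaces_of_isNClique_of_mem (hv : v ∉ G.support) (habc : G.IsNClique 3 {a, b, c})
    (ht : (addApex G v a b c).IsNClique 3 t) (hvt : v ∈ t) : t ∈ apexFaces v a b c := by
  have hsub : t ⊆ insert v {a, b, c} := by
    intro u hu
    by_cases huv : u = v
    · simp [huv]
    · exact Finset.mem_insert_of_mem
        ((addApex_adj_apex_iff hv habc).1 (ht.isClique hvt hu (Ne.symm huv)))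
  obtain ⟨r, hrt, hK⟩ := Finset.exists_eq_insert_iff.2 ⟨hsub, by
    rw [ht.card_eq, Finset.card_insert_of_notMem (notMem_of_notMem_support hv habc),
      habc.card_eq]⟩
  have hr : r ∈ ({a, b, c} : Finset ℕ) := by
    have hrK : r ∈ insert v {a, b, c} := hK ▸ t.mem_insert_self r
    exact (Finset.mem_insert.1 hrK).resolve_left fun h => hrt (h ▸ hvt)
  exact (mem_apexFaces_iff_of_isNClique hv habc).2 ⟨r, hr, hrt, hK⟩

lemma connected_addApex_of_notMem (hv : v ∉ G.support) (habc : G.IsNClique 3 {a, b, c})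
    (hvs : v ∉ s) (hx : x ∈ ({a, b, c} : Finset ℕ)) (hxs : x ∉ s)
    (hG : (G.induce (G.support \ ↑s)).Connected) :
    ((addApex G v a b c).induce ((addApex G v a b c).support \ ↑s)).Connected := by
  rw [support_addApex hv habc, Set.insert_sdiff_of_notMem _ (by exact_mod_cast hvs)]
  exact (hG.induce_of_le le_addApex).induce_insert
    ⟨habc.mem_support (by norm_num) hx, by exact_mod_cast hxs⟩
    ((addApex_adj_apex_iff hv habc).2 hx)

lemma connected_addApex_of_mem (hv : v ∉ G.support) (habc : G.IsNClique 3 {a, b, c})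
    (hvs : v ∈ s) (hG : (G.induce (G.support \ ↑(s.erase v))).Connected) :
    ((addApex G v a b c).induce ((addApex G v a b c).support \ ↑s)).Connected := by
  have hsupp : (addApex G v a b c).support \ ↑s = G.support \ ↑(s.erase v) := by
    rw [support_addApex hv habc, Set.insert_sdiff_of_mem _ (by exact_mod_cast hvs),
      Finset.coe_erase]
    ext x
    simp only [Set.mem_sdiff, Set.mem_singleton_iff]
    grind
  rw [hsupp]
  exact hG.induce_of_le le_addApex

end addApex

structure ApollonianInvariant (G : SimpleGraph ℕ) (Fs : Set (Finset ℕ)) : Prop where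
  exists_isNClique_four : ∀ t ∈ Fs, ∃ w ∉ t, G.IsNClique 4 (insert w t)
  exists_nonadj_common_neighbors : ∀ t, G.IsNClique 3 t → t ∉ Fs →
    ∃ v w, v ≠ w ∧ ¬ G.Adj v w ∧ (∀ u ∈ t, G.Adj v u) ∧ ∀ u ∈ t, G.Adj w u
  connected_diff_of_subset : ∀ t ∈ Fs, ∀ s ⊆ t, (G.induce (G.support \ ↑s)).Connected

lemma ApollonianInvariant.isNClique_three {G : SimpleGraph ℕ} {Fs : Set (Finset ℕ)}
    {t : Finset ℕ} (hI : ApollonianInvariant G Fs) (ht : t ∈ Fs) : G.IsNClique 3 t := by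
  obtain ⟨w, hwt, hK⟩ := hI.exists_isNClique_four t ht
  simpa [hwt] using hK.erase_of_mem (t.mem_insert_self w)

section base

lemma K4n_support : K4n.support = ↑(Finset.range 4) := by
  ext x
  simp only [mem_support, Finset.coe_range, Set.mem_Iio]
  constructor
  · rintro ⟨y, -, hx, -⟩
    exact hx
  · intro hx
    by_cases h0 : x = 0
    · exact ⟨1, by omega, by omega, by omega⟩
    · exact ⟨0, by omega, by omega, by omega⟩

lemma K4n_isClique {A : Set ℕ} (hA : A ⊆ ↑(Finset.range 4)) : K4n.IsClique A :=
  fun x hx y hy hxy => ⟨hxy, by simpa using hA hx, by simpa using hA hy⟩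

variable {t : Finset ℕ}

lemma exists_insert_eq_range_of_mem_K4nFaces
    (ht : t ∈ ({{0, 1, 2}, {0, 1, 3}, {0, 2, 3}, {1, 2, 3}} : Set (Finset ℕ))) :
    ∃ w ∉ t, insert w t = Finset.range 4 := by
  rcases ht with rfl | rfl | rfl | rfl
  exacts [⟨3, by decide, by decide⟩, ⟨2, by decide, by decide⟩, ⟨1, by decide, by decide⟩,
    ⟨0, by decide, by decide⟩]

lemma mem_K4nFaces_of_isNClique (ht : K4n.IsNClique 3 t) :
    t ∈ ({{0, 1, 2}, {0, 1, 3}, {0, 2, 3}, {1, 2, 3}} : Set (Finset ℕ)) := by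
  have hsub : t ⊆ Finset.range 4 := fun x hx => by
    simpa [K4n_support] using ht.mem_support (by norm_num) hx
  have hmem : t ∈ (Finset.range 4).powersetCard 3 := Finset.mem_powersetCard.2 ⟨hsub, ht.card_eq⟩
  rw [show (Finset.range 4).powersetCard 3 = {{0, 1, 2}, {0, 1, 3}, {0, 2, 3}, {1, 2, 3}} by
    decide] at hmem
  simpa using hmem

lemma ApollonianInvariant.base :
    ApollonianInvariant K4n {{0, 1, 2}, {0, 1, 3}, {0, 2, 3}, {1, 2, 3}} where
  exists_isNClique_four t ht := by
    obtain ⟨w, hwt, hw⟩ := exists_insert_eq_range_of_mem_K4nFaces ht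
    exact ⟨w, hwt, hw ▸ ⟨K4n_isClique subset_rfl, by simp⟩⟩
  exists_nonadj_common_neighbors t ht hnot := absurd (mem_K4nFaces_of_isNClique ht) hnot
  connected_diff_of_subset t ht s hs := by
    obtain ⟨w, hwt, hw⟩ := exists_insert_eq_range_of_mem_K4nFaces ht
    rw [K4n_support]
    refine (K4n_isClique Set.sdiff_subset).connected_induce ⟨w, ?_, fun h => hwt (hs h)⟩
    simp [← hw]

end base

namespace ApollonianInvariant

variable {G : SimpleGraph ℕ} {Fs : Set (Finset ℕ)} {a b c v : ℕ} {t : Finset ℕ}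

lemma subdivide_exists_isNClique_four (hI : ApollonianInvariant G Fs) (hface : {a, b, c} ∈ Fs)
    (hv : v ∉ G.support) (ht : t ∈ (Fs \ {({a, b, c} : Finset ℕ)}) ∪ apexFaces v a b c) :
    ∃ w ∉ t, (addApex G v a b c).IsNClique 4 (insert w t) := by
  have habc := hI.isNClique_three hface
  rcases ht with ⟨ht, -⟩ | ht
  · obtain ⟨w, hwt, hK⟩ := hI.exists_isNClique_four t ht
    exact ⟨w, hwt, hK.mono le_addApex⟩
  · obtain ⟨r, -, hrt, hK⟩ := (mem_apexFaces_iff_of_isNClique hv habc).1 ht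
    exact ⟨r, hrt, hK ▸ isNClique_insert_apex hv habc⟩

lemma subdivide_exists_nonadj_common_neighbors (hI : ApollonianInvariant G Fs)
    (hface : {a, b, c} ∈ Fs) (hv : v ∉ G.support) (ht : (addApex G v a b c).IsNClique 3 t)
    (hnot : t ∉ (Fs \ {({a, b, c} : Finset ℕ)}) ∪ apexFaces v a b c) :
    ∃ x y, x ≠ y ∧ ¬ (addApex G v a b c).Adj x y ∧
      (∀ u ∈ t, (addApex G v a b c).Adj x u) ∧ ∀ u ∈ t, (addApex G v a b c).Adj y u := by
  have habc := hI.isNClique_three hface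
  have hvt : v ∉ t := fun hvt => hnot (Or.inr (mem_apexFaces_of_isNClique_of_mem hv habc ht hvt))
  by_cases htabc : t = {a, b, c}
  · subst htabc
    obtain ⟨w, hwt, hK⟩ := hI.exists_isNClique_four _ hface
    have hwv : w ≠ v := fun h => hv (h ▸ hK.mem_support (by norm_num) (Finset.mem_insert_self _ _))
    refine ⟨v, w, hwv.symm, fun h => hwt ((addApex_adj_apex_iff hv habc).1 h),
      fun u hu => (addApex_adj_apex_iff hv habc).2 hu, fun u hu => le_addApex ?_⟩
    exact hK.isClique (Finset.mem_insert_self _ _) (Finset.mem_insert_of_mem hu)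
      (ne_of_mem_of_not_mem hu hwt).symm
  · have htG := ht.of_addApex hvt
    obtain ⟨x, y, hxy, hnxy, hx, hy⟩ :=
      hI.exists_nonadj_common_neighbors t htG fun h => hnot (Or.inl ⟨h, htabc⟩)
    obtain ⟨u, hu⟩ : t.Nonempty := Finset.card_pos.1 (by rw [htG.card_eq]; norm_num)
    have hxv : x ≠ v := fun h => hv (h ▸ ⟨u, hx u hu⟩)
    have hyv : y ≠ v := fun h => hv (h ▸ ⟨u, hy u hu⟩)
    exact ⟨x, y, hxy, fun h => hnxy ((addApex_adj_of_ne hxv hyv).1 h),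
      fun u hu => le_addApex (hx u hu), fun u hu => le_addApex (hy u hu)⟩

lemma subdivide_connected_diff_of_subset (hI : ApollonianInvariant G Fs)
    (hface : {a, b, c} ∈ Fs) (hv : v ∉ G.support)
    (ht : t ∈ (Fs \ {({a, b, c} : Finset ℕ)}) ∪ apexFaces v a b c) {s : Finset ℕ} (hst : s ⊆ t) :
    ((addApex G v a b c).induce ((addApex G v a b c).support \ ↑s)).Connected := by
  have habc := hI.isNClique_three hface
  rcases ht with ⟨ht, htabc⟩ | ht
  · have hvs : v ∉ s := fun h => hv ((hI.isNClique_three ht).mem_support (by norm_num) (hst h))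
    obtain ⟨x, hx, hxt⟩ : ∃ x ∈ ({a, b, c} : Finset ℕ), x ∉ t := by
      by_contra! h
      exact htabc (Finset.eq_of_subset_of_card_le h
        (by rw [(hI.isNClique_three ht).card_eq, habc.card_eq])).symm
    exact connected_addApex_of_notMem hv habc hvs hx (fun h => hxt (hst h))
      (hI.connected_diff_of_subset t ht s hst)
  · obtain ⟨r, hr, hrt, hK⟩ := (mem_apexFaces_iff_of_isNClique hv habc).1 ht
    have hsK : s ⊆ insert v {a, b, c} := hst.trans (hK ▸ Finset.subset_insert r t)
    by_cases hvs : v ∈ s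
    · exact connected_addApex_of_mem hv habc hvs
        (hI.connected_diff_of_subset _ hface _ (Finset.subset_insert_iff.1 hsK))
    · exact connected_addApex_of_notMem hv habc hvs hr (fun h => hrt (hst h))
        (hI.connected_diff_of_subset _ hface s ((Finset.subset_insert_iff_of_notMem hvs).1 hsK))

lemma subdivide (hI : ApollonianInvariant G Fs) (hface : {a, b, c} ∈ Fs) (hv : v ∉ G.support) :
    ApollonianInvariant (addApex G v a b c) ((Fs \ {({a, b, c} : Finset ℕ)}) ∪ apexFaces v a b c)
    where
  exists_isNClique_four _ := hI.subdivide_exists_isNClique_four hface hv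
  exists_nonadj_common_neighbors _ := hI.subdivide_exists_nonadj_common_neighbors hface hv
  connected_diff_of_subset _ ht _ := hI.subdivide_connected_diff_of_subset hface hv ht

end ApollonianInvariant

theorem ApollonianF.invariant {G : SimpleGraph ℕ} {Fs : Set (Finset ℕ)} (h : ApollonianF G Fs) :
    ApollonianInvariant G Fs := by
  induction h with
  | base => exact .base
  | subdivide G Fs a b c v _ hface hfresh ih => exact ih.subdivide hface fun ⟨y, hy⟩ => hfresh y hy

/-- If `(v1,v2,v3)` is a separating triangle of an Apollonian network `T`,
then there exist two non-adjacent vertices `v` and `w` of `T`, each adjacent to all of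
`v1`, `v2`, `v3` (yielding a `K_{2,3}` subgraph whose size-two part is non-adjacent). -/
theorem stmt_4 (T : SimpleGraph ℕ) (hT : IsApollonian T) (v1 v2 v3 : ℕ)
    (h12 : T.Adj v1 v2) (h13 : T.Adj v1 v3) (h23 : T.Adj v2 v3)
    (hsep : ¬ (T.induce (T.support \ {v1, v2, v3})).Connected) :
    ∃ v w : ℕ, v ≠ w ∧ ¬ T.Adj v w ∧
      T.Adj v v1 ∧ T.Adj v v2 ∧ T.Adj v v3 ∧
      T.Adj w v1 ∧ T.Adj w v2 ∧ T.Adj w v3 := by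
  obtain ⟨Fs, hFs⟩ := hT
  have hI := hFs.invariant
  have hface : ({v1, v2, v3} : Finset ℕ) ∉ Fs := fun h => hsep (by
    have hconn := hI.connected_diff_of_subset _ h _ subset_rfl
    rwa [Finset.coe_insert, Finset.coe_insert, Finset.coe_singleton] at hconn)
  obtain ⟨v, w, hvw, hnadj, hv, hw⟩ :=
    hI.exists_nonadj_common_neighbors _ (is3Clique_triple_iff.2 ⟨h12, h13, h23⟩) hface
  simp only [Finset.mem_insert, Finset.mem_singleton, forall_eq_or_imp, forall_eq] at hv hw
  exact ⟨v, w, hvw, hnadj, hv.1, hv.2.1, hv.2.2, hw.1, hw.2.1, hw.2.2⟩
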